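/- arXiv:2412.18898 — 4 statements merged into one kernel-verified Lean document; each statement's English description precedes it below -/
import Mathlib

section
/- Let $c, d$ be coprime integers with $1 < c < d$ and $g = cd - c - d$. For every integer $m$ with $0 \le m \le g$, exactly one of $m$ and $g - m$ is representable as $cx + dy$ with $x, y$ nonnegative integers. -/
/-- If `c*x + d*y = c*x' + d*y'` with `0 ≤ y < c`, `0 ≤ y'`, `c,d` coprime and positive,
then `x' ≤ x`. -/
lemma sylvester_aux (c d : ℤ) (hc : 1 < c) (hcd : c < d) (hgcd : IsCoprime c d)
    (x y x' y' : ℤ) (hy0 : 0 ≤ y) (hyc : y < c) (hy' : 0 ≤ y')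
    (heq : c * x + d * y = c * x' + d * y') : x' ≤ x := by
  have hkey : c * (x - x') = d * (y' - y) := by ring_nf; linarith
  have hdvd : c ∣ (y' - y) := by
    have : c ∣ d * (y' - y) := ⟨x - x', hkey.symm⟩
    exact (IsCoprime.dvd_of_dvd_mul_left hgcd this)
  obtain ⟨k, hk⟩ := hdvd
  have hkpos : 0 ≤ k := by
    by_contra h
    push_neg at h
    have : k ≤ -1 := by omega
    nlinarith
  have : x - x' = d * k := by
    have h2 : c * (x - x') = c * (d * k) := by rw [hkey, hk]; ring
    exact mul_left_cancel₀ (by positivity) h2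
  nlinarith

theorem sylvester_antisymmetry (c d : ℤ) (hc : 1 < c) (hcd : c < d)
    (hgcd : IsCoprime c d) (m : ℤ) (hm0 : 0 ≤ m) (hmg : m ≤ c * d - c - d) :
    Xor' (∃ x y : ℤ, 0 ≤ x ∧ 0 ≤ y ∧ m = c * x + d * y)
      (∃ x y : ℤ, 0 ≤ x ∧ 0 ≤ y ∧ (c * d - c - d) - m = c * x + d * y) := by
  have hc0 : (0:ℤ) < c := by linarith
  -- normalized representation of m
  obtain ⟨u, v, huv⟩ := id hgcd
  set b := m * v with hb
  set y := b % c with hy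
  set x := m * u + d * (b / c) with hx
  have hy0 : 0 ≤ y := Int.emod_nonneg b (by linarith)
  have hyc : y < c := Int.emod_lt_of_pos b hc0
  have hrep : m = c * x + d * y := by
    have hbd : b = c * (b / c) + y := (Int.mul_ediv_add_emod b c).symm
    have : m = m * (u * c + v * d) := by rw [huv]; ring
    rw [hx, hy]
    nlinarith [Int.mul_ediv_add_emod b c]
  have hrep2 : (c * d - c - d) - m = c * (-1 - x) + d * (c - 1 - y) := by
    rw [hrep]; ring
  by_cases hxpos : 0 ≤ x
  · left
    refine ⟨⟨x, y, hxpos, hy0, hrep⟩, ?_⟩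
    rintro ⟨x', y', hx', hy', heq⟩
    have : x' ≤ -1 - x := by
      apply sylvester_aux c d hc hcd hgcd _ (c - 1 - y) x' y' (by linarith) (by linarith) hy'
      rw [← hrep2, heq]
    linarith
  · right
    push_neg at hxpos
    constructor
    · exact ⟨-1 - x, c - 1 - y, by linarith, by linarith, hrep2⟩
    · rintro ⟨x', y', hx', hy', heq⟩
      have : x' ≤ x := by
        apply sylvester_aux c d hc hcd hgcd x y x' y' hy0 hyc hy'
        rw [← hrep, heq]
      linarith
end

section
/- Let $c, d$ be coprime integers with $1 < c < d$ and $g = cd - c - d$. The number of integers $m$ with $0 \le m \le g$ that are representable as $cx + dy$ with $x, y$ nonnegative integers equals $(g+1)/2$. -/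
/-!
Write `g = c * d - c - d`. Every integer has a unique expression `c * x + d * y` with
`0 ≤ x < d`, and it is representable exactly when `0 ≤ y`. Since
`g - (c * x + d * y) = c * (d - 1 - x) + d * (-1 - y)`, the reflection `m ↦ g - m` exchanges
representable and non-representable integers, so it pairs off the `g + 1` integers of `[0, g]`
and exactly half of them are representable.
-/

open Finset

theorem Finset.two_mul_card_filter_eq_card_of_involution {α : Type*} (s : Finset α)
    (p : α → Prop) [DecidablePred p] (σ : α → α) (hσ_mem : ∀ a ∈ s, σ a ∈ s)
    (hσ_invol : ∀ a ∈ s, σ (σ a) = a) (hp : ∀ a ∈ s, p (σ a) ↔ ¬ p a) :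
    2 * #(s.filter p) = #s := by
  have hswap : #(s.filter p) = #(s.filter fun a => ¬ p a) := by
    apply card_nbij' σ σ
    · intro a ha
      simp only [coe_filter, Set.mem_ofPred_eq] at ha ⊢
      exact ⟨hσ_mem a ha.1, fun h => (hp a ha.1).mp h ha.2⟩
    · intro a ha
      simp only [coe_filter, Set.mem_ofPred_eq] at ha ⊢
      exact ⟨hσ_mem a ha.1, (hp a ha.1).mpr ha.2⟩
    · exact fun a ha => hσ_invol a (mem_filter.mp ha).1
    · exact fun a ha => hσ_invol a (mem_filter.mp ha).1
  have := card_filter_add_card_filter_not (s := s) p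
  omega

theorem Int.two_mul_card_filter_Icc_eq_of_iff_not_sub (n : ℤ) (hn : -1 ≤ n) (p : ℤ → Prop)
    [DecidablePred p] (hp : ∀ m ∈ Icc 0 n, p (n - m) ↔ ¬ p m) :
    (2 * #((Icc 0 n).filter p) : ℤ) = n + 1 := by
  have hcard := two_mul_card_filter_eq_card_of_involution (Icc 0 n) p (n - ·)
    (fun m hm => by simp only [mem_Icc] at hm ⊢; omega) (fun m _ => sub_sub_cancel n m) hp
  rw [Int.card_Icc] at hcard
  omega

def IsRepresentable (c d m : ℤ) : Prop :=
  ∃ x y : ℤ, 0 ≤ x ∧ 0 ≤ y ∧ m = c * x + d * y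

section Coprime

variable {c d : ℤ}

theorem IsCoprime.exists_eq_mul_add_mul_of_lt (h : IsCoprime c d) (hd : 0 < d) (m : ℤ) :
    ∃ x y : ℤ, 0 ≤ x ∧ x < d ∧ m = c * x + d * y := by
  obtain ⟨u, v, huv⟩ := h
  refine ⟨m * u % d, m * v + m * u / d * c, Int.emod_nonneg _ hd.ne', Int.emod_lt_of_pos _ hd, ?_⟩
  linear_combination (-m) * huv - c * Int.emod_add_mul_ediv (m * u) d

theorem IsCoprime.nonneg_of_mul_add_mul_eq (h : IsCoprime c d) (hc : 0 ≤ c) (hd : 0 < d)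
    {x y a b : ℤ} (hxd : x < d) (ha : 0 ≤ a) (hb : 0 ≤ b)
    (heq : c * x + d * y = c * a + d * b) : 0 ≤ y := by
  -- `a = x + d * k` with `k ≥ 0`, whence `y = b + c * k`
  obtain ⟨k, hk⟩ : d ∣ a - x := h.symm.dvd_of_dvd_mul_left ⟨y - b, by linear_combination -heq⟩
  have hk0 : 0 ≤ k := by
    by_contra! hk_neg
    nlinarith
  have hy : d * y = d * (c * k + b) := by linear_combination heq + c * hk
  rw [mul_left_cancel₀ hd.ne' hy]
  positivity

theorem IsCoprime.isRepresentable_iff (h : IsCoprime c d) (hc : 0 ≤ c) (hd : 0 < d)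
    {m x y : ℤ} (hx : 0 ≤ x) (hxd : x < d) (hm : m = c * x + d * y) :
    IsRepresentable c d m ↔ 0 ≤ y :=
  ⟨fun ⟨_, _, ha, hb, hab⟩ => h.nonneg_of_mul_add_mul_eq hc hd hxd ha hb (hm ▸ hab),
    fun hy => ⟨x, y, hx, hy, hm⟩⟩

theorem IsCoprime.isRepresentable_sub_iff (h : IsCoprime c d) (hc : 0 ≤ c) (hd : 0 < d)
    (m : ℤ) : IsRepresentable c d (c * d - c - d - m) ↔ ¬ IsRepresentable c d m := by
  obtain ⟨x, y, hx, hxd, hm⟩ := h.exists_eq_mul_add_mul_of_lt hd m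
  have hm' : c * d - c - d - m = c * (d - 1 - x) + d * (-1 - y) := by rw [hm]; ring
  rw [h.isRepresentable_iff hc hd hx hxd hm,
    h.isRepresentable_iff hc hd (by omega) (by omega) hm']
  omega

end Coprime

theorem sylvester_count (c d : ℤ) (hc : 1 < c) (hcd : c < d)
    (hgcd : IsCoprime c d) :
    ({m : ℤ | 0 ≤ m ∧ m ≤ c * d - c - d ∧
        ∃ x y : ℤ, 0 ≤ x ∧ 0 ≤ y ∧ m = c * x + d * y}.ncard : ℤ)
      = ((c * d - c - d) + 1) / 2 := by
  classical
  have hg : -1 ≤ c * d - c - d := by nlinarith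
  have hset : {m : ℤ | 0 ≤ m ∧ m ≤ c * d - c - d ∧
      ∃ x y : ℤ, 0 ≤ x ∧ 0 ≤ y ∧ m = c * x + d * y} =
      ↑((Icc 0 (c * d - c - d)).filter (IsRepresentable c d)) := by
    ext m
    simp [IsRepresentable, and_assoc]
  have hcount := Int.two_mul_card_filter_Icc_eq_of_iff_not_sub _ hg (IsRepresentable c d)
    fun m _ => hgcd.isRepresentable_sub_iff (by omega) (by omega) m
  rw [hset, Set.ncard_coe_finset]
  omega
end

section
/- Let $c, d$ be coprime integers with $1 < c < d$. Then for any real $\ell \le cd - c - d$, the number of integers $n$ with $0 \le n \le \ell$ representable as $cx + dy$ ($x, y \in \mathbb{Z}_{\ge 0}$) equals $\sum_{i=0}^{\lfloor \ell/d \rfloor} \left( \lfloor (\ell - i d)/c \rfloor + 1 \right)$. -/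
theorem count_representable_formula (c d : ℕ) (hc : 1 < c) (hcd : c < d)
    (hgcd : Nat.Coprime c d) (ℓ : ℝ) (hℓ : ℓ ≤ (c * d - c - d : ℤ)) :
    ({n : ℤ | 0 ≤ n ∧ (n : ℝ) ≤ ℓ ∧
        ∃ x y : ℕ, n = c * x + d * y}.ncard : ℤ)
      = ∑ i ∈ Finset.Icc 0 ⌊ℓ / (d : ℝ)⌋, (⌊(ℓ - (i : ℝ) * d) / c⌋ + 1) := by
  have hc0 : (0:ℝ) < c := by exact_mod_cast Nat.zero_lt_of_lt hc
  have hd0 : (0:ℝ) < d := by exact_mod_cast Nat.zero_lt_of_lt (hc.trans hcd)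
  have hdZ : (0:ℤ) < d := by exact_mod_cast hd0
  have hcZ : (0:ℤ) < c := by exact_mod_cast hc0
  set s : Finset ℤ := Finset.Icc 0 ⌊ℓ / (d : ℝ)⌋ with hs
  set f : ℤ → Finset ℤ := fun i =>
    (Finset.Icc (0:ℤ) ⌊(ℓ - (i : ℝ) * d) / c⌋).image (fun x => c * x + d * i) with hf
  -- bound: elements x of inner range are < d
  have hxlt : ∀ i ∈ s, ∀ x ∈ Finset.Icc (0:ℤ) ⌊(ℓ - (i : ℝ) * d) / c⌋, x < d := by
    intro i hi x hx
    simp only [hs, Finset.mem_Icc] at hi hx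
    have hiR : (i:ℝ) ≤ ℓ / d := by exact_mod_cast Int.le_floor.mp hi.2
    have hxR : (x:ℝ) ≤ (ℓ - (i : ℝ) * d) / c := by exact_mod_cast Int.le_floor.mp hx.2
    have h1 : (x:ℝ) * c ≤ ℓ - (i:ℝ) * d := by
      rw [← le_div_iff₀ hc0]; exact hxR
    have hi0 : (0:ℝ) ≤ (i:ℝ) * d := by
      have : (0:ℝ) ≤ (i:ℝ) := by exact_mod_cast hi.1
      positivity
    have h2 : (x:ℝ) * c ≤ (c * d - c - d : ℤ) := by
      calc (x:ℝ) * c ≤ ℓ - (i:ℝ)*d := h1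
        _ ≤ ℓ := by linarith
        _ ≤ _ := hℓ
    have h3 : x * c ≤ (c * d - c - d : ℤ) := by exact_mod_cast h2
    have h4 : x * c < c * d := by
      have : (0:ℤ) < c + d := by linarith
      push_cast at h3 ⊢
      linarith
    rw [mul_comm x c] at h4
    exact lt_of_mul_lt_mul_left h4 (le_of_lt hcZ)
  have hset : {n : ℤ | 0 ≤ n ∧ (n : ℝ) ≤ ℓ ∧ ∃ x y : ℕ, n = c * x + d * y}
      = ↑(s.biUnion f) := by
    ext n
    simp only [Set.mem_setOf_eq, Finset.coe_biUnion, Set.mem_iUnion, Finset.mem_coe,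
      Finset.mem_biUnion, hf, Finset.mem_image, Finset.mem_Icc, hs]
    constructor
    · rintro ⟨hn0, hnℓ, x, y, rfl⟩
      push_cast at hnℓ
      have hcx : (0:ℝ) ≤ (c:ℝ) * x := by positivity
      have hdy : (0:ℝ) ≤ (d:ℝ) * y := by positivity
      refine ⟨y, ⟨Int.natCast_nonneg y, ?_⟩, x, ⟨Int.natCast_nonneg x, ?_⟩,
        by push_cast; ring⟩
      · rw [Int.le_floor, le_div_iff₀ hd0]; push_cast; linarith
      · rw [Int.le_floor, le_div_iff₀ hc0]; push_cast; linarith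
    · rintro ⟨i, ⟨hi0, hi⟩, x, ⟨hx0, hx⟩, rfl⟩
      have hiR : (i:ℝ) ≤ ℓ / d := by exact_mod_cast Int.le_floor.mp hi
      have hxR : (x:ℝ) ≤ (ℓ - (i : ℝ) * d) / c := by exact_mod_cast Int.le_floor.mp hx
      refine ⟨by positivity, ?_, x.toNat, i.toNat, ?_⟩
      · push_cast
        rw [le_div_iff₀ hc0] at hxR
        linarith
      · rw [Int.toNat_of_nonneg hx0, Int.toNat_of_nonneg hi0]
  rw [hset, Set.ncard_coe_finset]
  have hdisj : ∀ i ∈ s, ∀ j ∈ s, i ≠ j → Disjoint (f i) (f j) := by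
    intro i hi j hj hij
    rw [Finset.disjoint_left]
    rintro n hni hnj
    simp only [hf, Finset.mem_image] at hni hnj
    obtain ⟨x, hx, hx'⟩ := hni
    obtain ⟨x', hx2, hx2'⟩ := hnj
    have hlt := hxlt i hi x hx
    have hlt' := hxlt j hj x' hx2
    rw [Finset.mem_Icc] at hx hx2
    have heq : (c:ℤ) * (x - x') = d * (j - i) := by
      have := hx'.trans hx2'.symm
      ring_nf
      ring_nf at this
      linarith
    have hdvd : (d:ℤ) ∣ (x - x') := by
      have hco : IsCoprime (d:ℤ) (c:ℤ) := by
        exact_mod_cast (Nat.isCoprime_iff_coprime.mpr hgcd.symm)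
      exact hco.dvd_of_dvd_mul_left ⟨j - i, heq⟩
    have hzero : x - x' = 0 := by
      refine Int.eq_zero_of_abs_lt_dvd hdvd ?_
      rw [abs_lt]
      constructor <;> linarith
    have : (d:ℤ) * (j - i) = 0 := by rw [← heq, hzero, mul_zero]
    have : j - i = 0 := by
      rcases mul_eq_zero.mp this with h | h
      · omega
      · exact h
    exact hij (by omega)
  rw [Finset.card_biUnion hdisj]
  push_cast
  refine Finset.sum_congr rfl ?_
  intro i hi
  simp only [hf]
  rw [Finset.card_image_of_injective _ (fun a b hab => by
    exact mul_left_cancel₀ hcZ.ne' (add_right_cancel hab)), Int.card_Icc]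
  simp only [hs, Finset.mem_Icc] at hi
  have hiR : (i:ℝ) ≤ ℓ / d := by exact_mod_cast Int.le_floor.mp hi.2
  have hnn : (0:ℤ) ≤ ⌊(ℓ - (i : ℝ) * d) / c⌋ := by
    rw [Int.le_floor]
    have h5 : (i:ℝ) * d ≤ ℓ := (le_div_iff₀ hd0).mp hiR
    push_cast
    exact div_nonneg (by linarith) hc0.le
  rw [Int.toNat_of_nonneg (by omega)]
  ring
end

section
/- For every integer $k \ge 1$ there is a constant $C_k$ such that for all positive integers $c$, $\left| \frac{1}{\varphi(c)} \sum_{\substack{1 \le y \le c \\ \gcd(y,c)=1}} y^{1/k} - \frac{k}{k+1} c^{1/k} \right| \le C_k \cdot 2^{\omega(c)} \cdot \frac{c^{1/k}}{\varphi(c)} \cdot \max_{d \mid c} d^{-1/k} \cdot d$, and in particular $\frac{1}{\varphi(c)} \sum_{\substack{1 \le y \le c \\ \gcd(y,c)=1}} y^{1/k} = \frac{k}{k+1} c^{1/k} + O_\varepsilon(c^\varepsilon)$ for any $\varepsilon > 0$. -/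
/-!
Möbius inversion writes the sum over reduced residues as
`∑_{d ∣ c} μ(d) d^α ∑_{m ≤ c/d} m^α`, and `φ(c) = ∑_{d ∣ c} μ(d) (c/d)`. Comparing each inner sum
with `∫₀^{c/d} x^α dx` costs at most `(c/d)^α`, i.e. `c^α` after the factor `d^α`, and only the
`2^ω(c)` squarefree divisors contribute. Dividing by `φ(c)` gives the first bound, whose supremum
is at least its `d = 1` term. For the second, `c/φ(c) ≤ 2^ω(c)`, and `4^ω(c) = O_ε(c^ε)` because
only the primes below a constant fail `4 ≤ p^ε`.
-/

open Finset ArithmeticFunction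
open scoped ArithmeticFunction.Moebius

theorem sum_divisors_moebius_eq_ite {R : Type*} [Ring R] (n : ℕ) :
    ∑ d ∈ n.divisors, (μ d : R) = if n = 1 then 1 else 0 := by
  have h := congrArg (· n) (coe_moebius_mul_coe_zeta (R := R))
  simp only [coe_mul_zeta_apply, intCoe_apply, one_apply] at h
  exact h

theorem sum_divisors_abs_moebius {n : ℕ} (hn : n ≠ 0) :
    ∑ d ∈ n.divisors, |μ d| = 2 ^ #n.primeFactors := by
  simp_rw [abs_moebius]
  rw [← sum_filter, Nat.sum_divisors_filter_squarefree hn, Nat.factors_eq, sum_const,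
    card_powerset, nsmul_one, Nat.cast_pow, Nat.cast_two]
  rfl

theorem sum_Icc_filter_dvd {M : Type*} [AddCommMonoid M] {d : ℕ} (hd : 0 < d) (n : ℕ)
    (f : ℕ → M) :
    ∑ y ∈ Icc 1 n with d ∣ y, f y = ∑ m ∈ Icc 1 (n / d), f (d * m) := by
  symm
  refine sum_nbij (d * ·) ?_ (fun a _ b _ h => Nat.eq_of_mul_eq_mul_left hd h) ?_
    (fun _ _ => rfl)
  · intro m hm
    simp only [mem_Icc, mem_filter] at hm ⊢
    refine ⟨⟨Nat.mul_pos hd hm.1, ?_⟩, dvd_mul_right d m⟩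
    rw [mul_comm]
    exact (Nat.le_div_iff_mul_le hd).1 hm.2
  · intro y hy
    obtain ⟨⟨h1, h2⟩, m, rfl⟩ : (1 ≤ y ∧ y ≤ n) ∧ d ∣ y := by simpa using hy
    refine ⟨m, ?_, rfl⟩
    simp only [coe_Icc, Set.mem_Icc]
    exact ⟨Nat.pos_of_mul_pos_left h1, (Nat.le_div_iff_mul_le hd).2 (by rwa [mul_comm])⟩

theorem sum_Icc_filter_coprime_eq_sum_moebius {R : Type*} [CommRing R] {c : ℕ} (hc : c ≠ 0)
    (n : ℕ) (f : ℕ → R) :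
    ∑ y ∈ Icc 1 n with y.gcd c = 1, f y =
      ∑ d ∈ c.divisors, (μ d : R) * ∑ m ∈ Icc 1 (n / d), f (d * m) := by
  have hindicator : ∀ y, (if y.gcd c = 1 then f y else 0) =
      ∑ d ∈ c.divisors with d ∣ y, (μ d : R) * f y := by
    intro y
    have hgcd : {d ∈ c.divisors | d ∣ y} = (y.gcd c).divisors := by
      rw [← Nat.divisors_filter_dvd_of_dvd hc (Nat.gcd_dvd_right y c)]
      exact filter_congr fun d hd => by
        rw [Nat.dvd_gcd_iff, and_iff_left (Nat.dvd_of_mem_divisors hd)]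
    rw [← sum_mul, hgcd, sum_divisors_moebius_eq_ite]
    split_ifs <;> simp
  simp_rw [sum_filter, hindicator, sum_filter]
  rw [sum_comm]
  refine sum_congr rfl fun d hd => ?_
  rw [← sum_filter, ← mul_sum, sum_Icc_filter_dvd (Nat.pos_of_mem_divisors hd)]

theorem card_Icc_filter_gcd_eq_one (c : ℕ) : #{y ∈ Icc 1 c | y.gcd c = 1} = c.totient := by
  rw [← Nat.filter_coprime_Ico_eq_totient c 1, add_comm, Ico_add_one_right_eq_Icc]
  exact congrArg card (filter_congr fun y _ => by rw [Nat.Coprime, Nat.gcd_comm])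

theorem abs_sum_Icc_rpow_sub_le {α : ℝ} (hα : 0 < α) (N : ℕ) :
    |∑ m ∈ Icc 1 N, (m : ℝ) ^ α - (N : ℝ) ^ (α + 1) / (α + 1)| ≤ (N : ℝ) ^ α := by
  have hmono : MonotoneOn (fun x : ℝ => x ^ α) (Set.Icc 0 (0 + N)) :=
    fun x hx y _ hxy => Real.rpow_le_rpow hx.1 hxy hα.le
  have hintegral : ∫ x in (0 : ℝ)..N, x ^ α = (N : ℝ) ^ (α + 1) / (α + 1) := by
    rw [integral_rpow (Or.inl (by linarith)), Real.zero_rpow (by positivity), sub_zero]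
  have hlower := hmono.integral_le_sum
  have hupper := hmono.sum_le_integral
  simp only [zero_add, Nat.cast_add, Nat.cast_one] at hlower hupper
  rw [hintegral] at hlower hupper
  have hshift : ∑ m ∈ Icc 1 N, (m : ℝ) ^ α = ∑ i ∈ range N, ((i : ℝ) + 1) ^ α := by
    rw [← Ico_add_one_right_eq_Icc, sum_Ico_eq_sum_range]
    simp [add_comm]
  have hlast :
      ∑ i ∈ range N, ((i : ℝ) + 1) ^ α = ∑ i ∈ range N, (i : ℝ) ^ α + (N : ℝ) ^ α := by
    have h := sum_range_succ' (fun i => (i : ℝ) ^ α) N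
    rw [sum_range_succ] at h
    simpa [Real.zero_rpow hα.ne'] using h.symm
  rw [hshift, abs_le]
  constructor <;> linarith

theorem abs_sum_Icc_mul_rpow_sub_le {α : ℝ} (hα : 0 < α) (d N : ℕ) :
    |∑ m ∈ Icc 1 N, ((d * m : ℕ) : ℝ) ^ α - N * ((d * N : ℕ) : ℝ) ^ α / (α + 1)|
      ≤ ((d * N : ℕ) : ℝ) ^ α := by
  have hsplit : ∀ m : ℕ, ((d * m : ℕ) : ℝ) ^ α = (d : ℝ) ^ α * (m : ℝ) ^ α := fun m => by
    push_cast
    exact Real.mul_rpow (by positivity) (by positivity)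
  have hN : (N : ℝ) * (N : ℝ) ^ α = (N : ℝ) ^ (α + 1) := by
    rw [Real.rpow_add_of_nonneg (by positivity) hα.le zero_le_one, Real.rpow_one, mul_comm]
  simp_rw [hsplit, ← mul_sum]
  rw [mul_left_comm, hN, mul_div_assoc, ← mul_sub, abs_mul, abs_of_nonneg (by positivity)]
  exact mul_le_mul_of_nonneg_left (abs_sum_Icc_rpow_sub_le hα N) (by positivity)

theorem abs_sum_Icc_filter_coprime_rpow_sub_le {α : ℝ} (hα : 0 < α) {c : ℕ} (hc : c ≠ 0) :
    |∑ y ∈ Icc 1 c with y.gcd c = 1, (y : ℝ) ^ α - c.totient * (c : ℝ) ^ α / (α + 1)|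
      ≤ 2 ^ #c.primeFactors * (c : ℝ) ^ α := by
  have htotient : (c.totient : ℝ) = ∑ d ∈ c.divisors, (μ d : ℝ) * (c / d : ℕ) := by
    simpa [card_Icc_filter_gcd_eq_one] using
      sum_Icc_filter_coprime_eq_sum_moebius hc c fun _ => (1 : ℝ)
  have hterm : ∀ d ∈ c.divisors,
      |∑ m ∈ Icc 1 (c / d), ((d * m : ℕ) : ℝ) ^ α - (c / d : ℕ) * (c : ℝ) ^ α / (α + 1)|
        ≤ (c : ℝ) ^ α := fun d hd => by
    simpa only [Nat.mul_div_cancel' (Nat.dvd_of_mem_divisors hd)] using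
      abs_sum_Icc_mul_rpow_sub_le hα d (c / d)
  calc _ = |∑ d ∈ c.divisors, (μ d : ℝ) *
        (∑ m ∈ Icc 1 (c / d), ((d * m : ℕ) : ℝ) ^ α - (c / d : ℕ) * (c : ℝ) ^ α / (α + 1))| := by
        rw [sum_Icc_filter_coprime_eq_sum_moebius hc, htotient, sum_mul, sum_div,
          ← sum_sub_distrib]
        simp only [mul_sub, mul_div_assoc, mul_assoc]
    _ ≤ ∑ d ∈ c.divisors, |(μ d : ℝ)| * (c : ℝ) ^ α := by
        refine (abs_sum_le_sum_abs _ _).trans (sum_le_sum fun d hd => ?_)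
        rw [abs_mul]
        exact mul_le_mul_of_nonneg_left (hterm d hd) (abs_nonneg _)
    _ = 2 ^ #c.primeFactors * (c : ℝ) ^ α := by
        rw [← sum_mul]
        congr 1
        exact_mod_cast sum_divisors_abs_moebius hc

theorem abs_inv_totient_mul_sum_coprime_rpow_sub_le {α : ℝ} (hα : 0 < α) {c : ℕ} (hc : 0 < c) :
    |1 / (c.totient : ℝ) * ∑ y ∈ Icc 1 c with y.gcd c = 1, (y : ℝ) ^ α -
        1 / (α + 1) * (c : ℝ) ^ α|
      ≤ 2 ^ #c.primeFactors * ((c : ℝ) ^ α / c.totient) := by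
  have hφ : (0 : ℝ) < c.totient := by exact_mod_cast Nat.totient_pos.2 hc
  have hnormalize :
      1 / (c.totient : ℝ) * ∑ y ∈ Icc 1 c with y.gcd c = 1, (y : ℝ) ^ α -
          1 / (α + 1) * (c : ℝ) ^ α =
        (∑ y ∈ Icc 1 c with y.gcd c = 1, (y : ℝ) ^ α - c.totient * (c : ℝ) ^ α / (α + 1)) /
          c.totient := by
    field_simp
  rw [hnormalize, abs_div, abs_of_pos hφ, ← mul_div_assoc]
  gcongr
  exact abs_sum_Icc_filter_coprime_rpow_sub_le hα hc.ne'

theorem le_totient_mul_two_pow_card_primeFactors (n : ℕ) :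
    n ≤ n.totient * 2 ^ #n.primeFactors := by
  have hprod : 0 < ∏ p ∈ n.primeFactors, p :=
    prod_pos fun p hp => Nat.pos_of_mem_primeFactors hp
  refine Nat.le_of_mul_le_mul_right ?_ hprod
  calc n * ∏ p ∈ n.primeFactors, p ≤ n * ∏ p ∈ n.primeFactors, (p - 1) * 2 := by
        gcongr with p hp
        have := (Nat.prime_of_mem_primeFactors hp).two_le
        omega
    _ = n.totient * 2 ^ #n.primeFactors * ∏ p ∈ n.primeFactors, p := by
        rw [prod_mul_distrib, prod_const, ← mul_assoc, ← Nat.totient_mul_prod_primeFactors]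
        ring

theorem exists_pow_card_primeFactors_le_mul_rpow {B : ℝ} (hB : 1 ≤ B) {ε : ℝ} (hε : 0 < ε) :
    ∃ C : ℝ, 0 < C ∧ ∀ n : ℕ, n ≠ 0 → B ^ #n.primeFactors ≤ C * (n : ℝ) ^ ε := by
  classical
  set T := ⌈B ^ (1 / ε)⌉₊
  refine ⟨B ^ T, by positivity, fun n hn => ?_⟩
  have hprime : ∀ p : ℕ, 1 ≤ p → B ≤ (if p < T then B else 1) * (p : ℝ) ^ ε := by
    intro p hp
    split_ifs with hpT
    · exact le_mul_of_one_le_right (by positivity)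
        (Real.one_le_rpow (by exact_mod_cast hp) hε.le)
    · calc B = (B ^ (1 / ε)) ^ ε := by
            rw [← Real.rpow_mul (by positivity), one_div_mul_cancel hε.ne', Real.rpow_one]
        _ ≤ 1 * (p : ℝ) ^ ε := by
            rw [one_mul]
            exact Real.rpow_le_rpow (by positivity)
              ((Nat.le_ceil _).trans (by exact_mod_cast not_lt.1 hpT)) hε.le
  have hsmall : #{p ∈ n.primeFactors | p < T} ≤ T :=
    (card_le_card fun p hp => mem_range.2 (mem_filter.1 hp).2).trans (card_range T).le
  calc B ^ #n.primeFactors = ∏ p ∈ n.primeFactors, B := (prod_const B).symm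
    _ ≤ ∏ p ∈ n.primeFactors, (if p < T then B else 1) * (p : ℝ) ^ ε :=
        prod_le_prod (fun _ _ => by positivity)
          fun p hp => hprime p (Nat.pos_of_mem_primeFactors hp)
    _ = B ^ #{p ∈ n.primeFactors | p < T} * (∏ p ∈ n.primeFactors, (p : ℝ)) ^ ε := by
        rw [prod_mul_distrib, prod_ite, prod_const, prod_const_one, mul_one,
          Real.finsetProd_rpow _ _ fun p _ => by positivity]
    _ ≤ B ^ T * (n : ℝ) ^ ε := by
        gcongr
        rw [← Nat.cast_prod]
        exact_mod_cast Nat.le_of_dvd (Nat.pos_of_ne_zero hn) (Nat.prod_primeFactors_dvd n)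

theorem coprime_sum_rpow_asymptotic (k : ℕ) (hk : 1 ≤ k) :
    (∃ C : ℝ, 0 < C ∧ ∀ c : ℕ, 0 < c →
      |(1 / (Nat.totient c : ℝ)) *
          (∑ y ∈ (Finset.Icc 1 c).filter (fun y => Nat.gcd y c = 1),
            (y : ℝ) ^ ((1 : ℝ) / k)) -
          (k : ℝ) / (k + 1) * (c : ℝ) ^ ((1 : ℝ) / k)|
        ≤ C * 2 ^ c.primeFactors.card * ((c : ℝ) ^ ((1 : ℝ) / k) / (Nat.totient c : ℝ)) *
            (⨆ d : c.divisors, ((d : ℕ) : ℝ) ^ (-(1 : ℝ) / k) * ((d : ℕ) : ℝ))) ∧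
    ∀ ε : ℝ, 0 < ε → ∃ C : ℝ, 0 < C ∧ ∀ c : ℕ, 0 < c →
      |(1 / (Nat.totient c : ℝ)) *
          (∑ y ∈ (Finset.Icc 1 c).filter (fun y => Nat.gcd y c = 1),
            (y : ℝ) ^ ((1 : ℝ) / k)) -
          (k : ℝ) / (k + 1) * (c : ℝ) ^ ((1 : ℝ) / k)|
        ≤ C * (c : ℝ) ^ ε := by
  have hk' : (0 : ℝ) < k := by exact_mod_cast hk
  have hα : (0 : ℝ) < 1 / k := one_div_pos.2 hk'
  have hratio : (k : ℝ) / (k + 1) = 1 / (1 / k + 1) := by field_simp; ring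
  have hmean := fun c (hc : 0 < c) => hratio ▸ abs_inv_totient_mul_sum_coprime_rpow_sub_le hα hc
  refine ⟨⟨1, one_pos, fun c hc => (hmean c hc).trans ?_⟩, fun ε hε => ?_⟩
  · have hsup : 1 ≤ ⨆ d : c.divisors, ((d : ℕ) : ℝ) ^ (-(1 : ℝ) / k) * ((d : ℕ) : ℝ) :=
      le_ciSup_of_le (Set.finite_range _).bddAbove ⟨1, Nat.one_mem_divisors.2 hc.ne'⟩ (by simp)
    rw [one_mul]
    exact le_mul_of_one_le_right (by positivity) hsup
  · obtain ⟨C, hC, hbound⟩ := exists_pow_card_primeFactors_le_mul_rpow (B := 4) (by norm_num) hε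
    refine ⟨C, hC, fun c hc => (hmean c hc).trans ?_⟩
    have hφ : (0 : ℝ) < c.totient := by exact_mod_cast Nat.totient_pos.2 hc
    calc 2 ^ #c.primeFactors * ((c : ℝ) ^ ((1 : ℝ) / k) / c.totient)
        ≤ 2 ^ #c.primeFactors * ((c : ℝ) / c.totient) := by
          gcongr
          exact Real.rpow_le_self_of_one_le (by exact_mod_cast hc)
            ((div_le_one hk').2 (by exact_mod_cast hk))
      _ ≤ 2 ^ #c.primeFactors * 2 ^ #c.primeFactors := by
          gcongr
          rw [div_le_iff₀ hφ, mul_comm]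
          exact_mod_cast le_totient_mul_two_pow_card_primeFactors c
      _ = 4 ^ #c.primeFactors := by rw [← mul_pow]; norm_num
      _ ≤ C * (c : ℝ) ^ ε := hbound c hc.ne'
end
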